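/- Let f, g : ℝ → ℝ be such that f − 1 and g − 1 are differentiable and square-integrable with square-integrable derivatives, and suppose inf_{y ∈ ℝ} ‖f − g(· + y)‖_{H¹} < ‖g − 1‖_{H¹}. Then the infimum is attained: there exists y₀ ∈ ℝ such that ‖f − g(· + y₀)‖_{H¹} = inf_{y ∈ ℝ} ‖f − g(· + y)‖_{H¹}. -/

import Mathlib

/-!
Write `u = f - 1`, `v = g - 1` and `τ_y` for translation by `y` on `L²(ℝ)`. Then
`‖f - g(· + y)‖²_{H¹} = ‖u - τ_y v‖² + ‖u' - τ_y v'‖²`, a continuous function of `y`. The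
correlations `⟪u, τ_y v⟫` vanish for large `|y|` when `u`, `v` have compact support, hence tend to
`0` at infinity for all `u, v ∈ L²` by density, so the distance tends to
`(‖u‖²_{H¹} + ‖v‖²_{H¹})^{1/2} ≥ ‖g - 1‖_{H¹}`. The hypothesis thus puts some value strictly below
the limit at infinity, and a continuous function with this property attains its infimum.
-/

open MeasureTheory

/-- The squared `H¹(ℝ)` norm, `‖u‖_{H¹}² = ∫ u² + ∫ (u')²`. -/
noncomputable def H1normSq (u : ℝ → ℝ) : ℝ :=
  (∫ x : ℝ, (u x) ^ 2) + ∫ x : ℝ, (deriv u x) ^ 2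

/-- The `H¹(ℝ)` norm. -/
noncomputable def H1norm (u : ℝ → ℝ) : ℝ := Real.sqrt (H1normSq u)

open Filter Set
open scoped InnerProductSpace Topology

theorem tendsto_nhds_zero_of_dense {X α : Type*} [PseudoMetricSpace X] {s : Set X}
    (hs : Dense s) {l : Filter α} {Φ : X → α → ℝ} {C : ℝ}
    (hΦ : ∀ x x' a, |Φ x a - Φ x' a| ≤ C * dist x x')
    (h : ∀ x ∈ s, Tendsto (Φ x) l (𝓝 0)) (x : X) : Tendsto (Φ x) l (𝓝 0) := by
  refine Metric.tendsto_nhds.2 fun ε hε => ?_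
  obtain ⟨x₀, hx₀, hd⟩ := hs.exists_dist_lt x (ε := ε / (2 * (|C| + 1))) (by positivity)
  rw [lt_div_iff₀ (by positivity)] at hd
  filter_upwards [Metric.tendsto_nhds.1 (h x₀ hx₀) (ε / 2) (half_pos hε)] with a ha
  rw [Real.dist_0_eq_abs] at ha ⊢
  nlinarith [abs_sub_abs_le_abs_sub (Φ x a) (Φ x₀ a), hΦ x x₀ a, le_abs_self C,
    dist_nonneg (x := x) (y := x₀), abs_nonneg C]

theorem Continuous.exists_eq_ciInf_of_tendsto_cocompact {α : Type*} [TopologicalSpace α]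
    [Nonempty α] {φ : α → ℝ} {L : ℝ} (hφ : Continuous φ)
    (hlim : Tendsto φ (cocompact α) (𝓝 L)) (hlt : ⨅ a, φ a < L) :
    ∃ a₀, φ a₀ = ⨅ a, φ a := by
  obtain ⟨a₁, ha₁⟩ := exists_lt_of_ciInf_lt hlt
  obtain ⟨a₀, ha₀⟩ :=
    hφ.exists_forall_le' a₁ (hlim.eventually (eventually_ge_nhds ha₁))
  have hbdd : BddBelow (range φ) := ⟨φ a₀, by rintro _ ⟨a, rfl⟩; exact ha₀ a⟩
  exact ⟨a₀, le_antisymm (le_ciInf ha₀) (ciInf_le hbdd a₀)⟩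

theorem HasCompactSupport.eventually_mul_comp_add_eq_zero {G M : Type*} [TopologicalSpace G]
    [AddCommGroup G] [IsTopologicalAddGroup G] [MulZeroClass M] {g h : G → M}
    (hg : HasCompactSupport g) (hh : HasCompactSupport h) :
    ∀ᶠ y in cocompact G, ∀ x, g x * h (x + y) = 0 := by
  have hK : IsCompact ((fun p : G × G => p.1 - p.2) '' (tsupport h ×ˢ tsupport g)) :=
    (hh.isCompact.prod hg.isCompact).image continuous_sub
  filter_upwards [hK.compl_mem_cocompact] with y hy x
  by_contra hne
  exact hy ⟨(x + y, x), ⟨subset_tsupport h (right_ne_zero_of_mul hne),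
    subset_tsupport g (left_ne_zero_of_mul hne)⟩, add_sub_cancel_left x y⟩

local notation "L²" => Lp ℝ 2 (volume : Measure ℝ)

noncomputable abbrev translateL2 (y : ℝ) : L² →+ L² :=
  Lp.compMeasurePreserving (· + y) (measurePreserving_add_right volume y)

theorem continuous_translateL2 (u : L²) : Continuous fun y => translateL2 y u := by
  have hshift : Continuous fun y : ℝ => (⟨(· + y), continuous_add_const y⟩ : C(ℝ, ℝ)) :=
    ContinuousMap.continuous_of_continuous_uncurry _ (continuous_snd.add continuous_fst)
  exact continuous_const.compMeasurePreservingLp hshift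
    (fun y => measurePreserving_add_right volume y) ENNReal.ofNat_ne_top

theorem abs_inner_translateL2_le (u v : L²) (y : ℝ) :
    |⟪u, translateL2 y v⟫_ℝ| ≤ ‖u‖ * ‖v‖ := by
  simpa [Lp.norm_compMeasurePreserving] using abs_real_inner_le_norm u (translateL2 y v)

theorem eventually_inner_translateL2_eq_zero {u v : L²} {g h : ℝ → ℝ} (hu : u =ᵐ[volume] g)
    (hv : v =ᵐ[volume] h) (hg : HasCompactSupport g) (hh : HasCompactSupport h) :
    ∀ᶠ y in cocompact ℝ, ⟪u, translateL2 y v⟫_ℝ = 0 := by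
  filter_upwards [hg.eventually_mul_comp_add_eq_zero hh] with y hy
  have hvy : v ∘ (· + y) =ᵐ[volume] h ∘ (· + y) :=
    (measurePreserving_add_right volume y).quasiMeasurePreserving.ae_eq_comp hv
  rw [L2.inner_def]
  refine (integral_congr_ae ?_).trans (integral_zero ℝ ℝ)
  filter_upwards [hu, hvy, Lp.coeFn_compMeasurePreserving v (measurePreserving_add_right volume y)]
    with x hux hvx hτx
  rw [hux, hτx, hvx]
  simpa [mul_comm] using hy x

theorem tendsto_inner_translateL2_cocompact (u v : L²) :
    Tendsto (fun y => ⟪u, translateL2 y v⟫_ℝ) (cocompact ℝ) (𝓝 0) := by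
  have hD := Lp.dense_hasCompactSupport_contDiff (E := ℝ) (F := ℝ) (μ := volume) (p := 2)
    ENNReal.ofNat_ne_top
  refine tendsto_nhds_zero_of_dense hD (Φ := fun v y => ⟪u, translateL2 y v⟫_ℝ) (C := ‖u‖)
    (fun v v' y => ?_) (fun v₀ hv₀ => ?_) v
  · rw [← inner_sub_right, ← map_sub, dist_eq_norm]
    exact abs_inner_translateL2_le _ _ y
  refine tendsto_nhds_zero_of_dense hD (Φ := fun u y => ⟪u, translateL2 y v₀⟫_ℝ) (C := ‖v₀‖)
    (fun u u' y => ?_) (fun u₀ hu₀ => ?_) u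
  · rw [← inner_sub_left, dist_eq_norm, mul_comm]
    exact abs_inner_translateL2_le _ _ y
  obtain ⟨g, hug, hg, -⟩ := hu₀
  obtain ⟨h, hvh, hh, -⟩ := hv₀
  exact tendsto_const_nhds.congr'
    ((eventually_inner_translateL2_eq_zero hug hvh hg hh).mono fun _ hy => hy.symm)

theorem tendsto_norm_sub_translateL2_sq_cocompact (u v : L²) :
    Tendsto (fun y => ‖u - translateL2 y v‖ ^ 2) (cocompact ℝ) (𝓝 (‖u‖ ^ 2 + ‖v‖ ^ 2)) := by
  simp only [norm_sub_sq_real, Lp.norm_compMeasurePreserving]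
  simpa using (((tendsto_inner_translateL2_cocompact u v).const_mul 2).const_sub
    (‖u‖ ^ 2)).add_const (‖v‖ ^ 2)

theorem integral_sq_eq_norm_toLp_sq {α : Type*} [MeasurableSpace α] {μ : Measure α} {u : α → ℝ}
    (hu : MemLp u 2 μ) : ∫ x, u x ^ 2 ∂μ = ‖hu.toLp u‖ ^ 2 := by
  rw [← real_inner_self_eq_norm_sq, L2.inner_def]
  refine integral_congr_ae ?_
  filter_upwards [hu.coeFn_toLp] with x hx
  simp [hx, sq]

theorem integral_sq_sub_comp_add {u v : ℝ → ℝ} (hu : MemLp u 2 volume) (hv : MemLp v 2 volume)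
    (y : ℝ) :
    ∫ x, (u x - v (x + y)) ^ 2 = ‖hu.toLp u - translateL2 y (hv.toLp v)‖ ^ 2 := by
  have hvy := hv.comp_measurePreserving (measurePreserving_add_right volume y)
  rw [translateL2, Lp.toLp_compMeasurePreserving, ← hu.toLp_sub hvy,
    ← integral_sq_eq_norm_toLp_sq]
  rfl

theorem H1normSq_eq_norm_toLp_sq_add {u : ℝ → ℝ} (hu : MemLp u 2 volume)
    (hu' : MemLp (deriv u) 2 volume) :
    H1normSq u = ‖hu.toLp u‖ ^ 2 + ‖hu'.toLp (deriv u)‖ ^ 2 := by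
  rw [H1normSq, integral_sq_eq_norm_toLp_sq hu, integral_sq_eq_norm_toLp_sq hu']

theorem H1normSq_sub_comp_add {u v : ℝ → ℝ} (hu : Differentiable ℝ u) (hv : Differentiable ℝ v)
    (hu₂ : MemLp u 2 volume) (hv₂ : MemLp v 2 volume) (hu' : MemLp (deriv u) 2 volume)
    (hv' : MemLp (deriv v) 2 volume) (y : ℝ) :
    H1normSq (fun x => u x - v (x + y)) = ‖hu₂.toLp u - translateL2 y (hv₂.toLp v)‖ ^ 2 +
      ‖hu'.toLp (deriv u) - translateL2 y (hv'.toLp (deriv v))‖ ^ 2 := by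
  have hderiv : deriv (fun x => u x - v (x + y)) = fun x => deriv u x - deriv v (x + y) := by
    funext x
    have hvy : Differentiable ℝ fun x => v (x + y) := by fun_prop
    rw [deriv_fun_sub (hu x) (hvy x), deriv_comp_add_const]
  rw [H1normSq, hderiv, integral_sq_sub_comp_add hu₂ hv₂, integral_sq_sub_comp_add hu' hv']

theorem exists_H1norm_sub_comp_add_eq_iInf {u v : ℝ → ℝ} (hu : Differentiable ℝ u)
    (hv : Differentiable ℝ v) (hu₂ : MemLp u 2 volume) (hv₂ : MemLp v 2 volume)
    (hu' : MemLp (deriv u) 2 volume) (hv' : MemLp (deriv v) 2 volume)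
    (hlt : ⨅ y, H1norm (fun x => u x - v (x + y)) < H1norm v) :
    ∃ y₀, H1norm (fun x => u x - v (x + y₀)) = ⨅ y, H1norm (fun x => u x - v (x + y)) := by
  set U := hu₂.toLp u
  set V := hv₂.toLp v
  set U' := hu'.toLp (deriv u)
  set V' := hv'.toLp (deriv v)
  have hφ : ∀ y, H1norm (fun x => u x - v (x + y)) =
      √(‖U - translateL2 y V‖ ^ 2 + ‖U' - translateL2 y V'‖ ^ 2) := fun y => by
    rw [H1norm, H1normSq_sub_comp_add hu hv hu₂ hv₂ hu' hv' y]
  have hcont : Continuous fun y => √(‖U - translateL2 y V‖ ^ 2 + ‖U' - translateL2 y V'‖ ^ 2) :=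
    (((continuous_const.sub (continuous_translateL2 V)).norm.pow 2).add
      ((continuous_const.sub (continuous_translateL2 V')).norm.pow 2)).sqrt
  have hlim := ((tendsto_norm_sub_translateL2_sq_cocompact U V).add
    (tendsto_norm_sub_translateL2_sq_cocompact U' V')).sqrt
  have hv_le : H1norm v ≤ √((‖U‖ ^ 2 + ‖V‖ ^ 2) + (‖U'‖ ^ 2 + ‖V'‖ ^ 2)) := by
    rw [H1norm, H1normSq_eq_norm_toLp_sq_add hv₂ hv']
    exact Real.sqrt_le_sqrt (by linarith [sq_nonneg ‖U‖, sq_nonneg ‖U'‖])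
  simp only [hφ] at hlt ⊢
  exact hcont.exists_eq_ciInf_of_tendsto_cocompact hlim (hlt.trans_le hv_le)

theorem stmt_8 (f g : ℝ → ℝ)
    (hf : Differentiable ℝ (fun x => f x - 1))
    (hf1 : Integrable (fun x => (f x - 1) ^ 2))
    (hf2 : Integrable (fun x => (deriv (fun y => f y - 1) x) ^ 2))
    (hg : Differentiable ℝ (fun x => g x - 1))
    (hg1 : Integrable (fun x => (g x - 1) ^ 2))
    (hg2 : Integrable (fun x => (deriv (fun y => g y - 1) x) ^ 2))
    (hlt : (⨅ y : ℝ, H1norm (fun x => f x - g (x + y))) < H1norm (fun x => g x - 1)) :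
    ∃ y₀ : ℝ, H1norm (fun x => f x - g (x + y₀)) =
      ⨅ y : ℝ, H1norm (fun x => f x - g (x + y)) := by
  have hf₂ := (memLp_two_iff_integrable_sq hf.continuous.aestronglyMeasurable).2 hf1
  have hg₂ := (memLp_two_iff_integrable_sq hg.continuous.aestronglyMeasurable).2 hg1
  have hf' := (memLp_two_iff_integrable_sq (measurable_deriv _).aestronglyMeasurable).2 hf2
  have hg' := (memLp_two_iff_integrable_sq (measurable_deriv _).aestronglyMeasurable).2 hg2
  simpa only [sub_sub_sub_cancel_right] using
    exists_H1norm_sub_comp_add_eq_iInf hf hg hf₂ hg₂ hf' hg'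
      (by simpa only [sub_sub_sub_cancel_right] using hlt)
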